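/- For every positive integer n of NAF-bitlength k, the number of optimal (minimal-weight) k-bit BSD representations of n equals the leading coefficient of the Stern polynomial B_{2^k - n}, and the number of zeros in an optimal representation equals deg(B_{2^k - n}). -/

import Mathlib

open Polynomial in
/-- The Stern polynomial: `B 0 = 0`, `B 1 = 1`, `B (2n) = t * B n`, `B (2n+1) = B n + B (n+1)`. -/
noncomputable def sternP : ℕ → Polynomial ℕ
  | 0 => 0
  | 1 => 1
  | n + 2 =>
    if (n + 2) % 2 = 0 then X * sternP (n / 2 + 1)
    else sternP (n / 2 + 1) + sternP (n / 2 + 2)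
decreasing_by all_goals omega

/-- The digits of a BSD representation lie in {-1, 0, 1}. -/
def IsBSDDigits {i : ℕ} (b : Fin i → ℤ) : Prop := ∀ j, b j ∈ ({-1, 0, 1} : Set ℤ)

/-- The value represented by the digit string `b` (least significant digit `b 0`). -/
def bsdVal {i : ℕ} (b : Fin i → ℤ) : ℤ := ∑ j : Fin i, b j * 2 ^ (j : ℕ)

/-- `b` is a (not necessarily reduced) non-adjacent form digit string of length `k`:
digits in {-1,0,1}, no two adjacent digits both nonzero, and nonzero leading digit
(when `k > 0`). -/
def IsReducedNAF {k : ℕ} (b : Fin k → ℤ) : Prop :=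
  IsBSDDigits b ∧
  (∀ j : Fin k, ∀ h : (j : ℕ) + 1 < k, b j = 0 ∨ b ⟨(j : ℕ) + 1, h⟩ = 0) ∧
  (∀ h : 0 < k, b ⟨k - 1, Nat.sub_lt h one_pos⟩ ≠ 0)

/-- `m` has a reduced NAF representation of bitlength `k`. -/
def HasNAFLen (m : ℤ) (k : ℕ) : Prop :=
  ∃ b : Fin k → ℤ, IsReducedNAF b ∧ bsdVal b = m

/-- `I k`: the set of positive integers of NAF-bitlength `k`. -/
def NAFInterval (k : ℕ) : Set ℕ := {n : ℕ | HasNAFLen (n : ℤ) k}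

/-- `a k = min I k`: `a 1 = 1`, `a 2 = 2`, `a k = 2^(k-2) + a (k-2)`. -/
def aseq : ℕ → ℕ
  | 0 => 0
  | 1 => 1
  | 2 => 2
  | k + 3 => 2 ^ (k + 1) + aseq (k + 1)

/-- The NAF-bitlength of `n`. -/
noncomputable def nafLen (n : ℕ) : ℕ := sInf {k : ℕ | HasNAFLen (n : ℤ) k}

/-- The minimal Hamming weight of a BSD representation of `n` of length
equal to its NAF-bitlength. -/
noncomputable def minWeight (n : ℕ) : ℕ :=
  sInf {w : ℕ | ∃ b : Fin (nafLen n) → ℤ,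
    IsBSDDigits b ∧ bsdVal b = (n : ℤ) ∧ {j | b j ≠ 0}.ncard = w}

/-- `Z n`: the number of zeros in an optimal (minimal-weight) BSD representation of `n`
of length equal to its NAF-bitlength. -/
noncomputable def Zfun (n : ℕ) : ℕ := nafLen n - minWeight n

/-- `M n`: the number of optimal (minimal-weight) BSD representations of `n`
of length equal to its NAF-bitlength. -/
noncomputable def Mfun (n : ℕ) : ℕ :=
  {b : Fin (nafLen n) → ℤ |
    IsBSDDigits b ∧ bsdVal b = (n : ℤ) ∧ {j | b j ≠ 0}.ncard = minWeight n}.ncard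

/-!
Count the `k`-digit BSD representations of `n` by their number of zero digits, as the
polynomial `∑ X ^ (number of zeros)`. The lowest digit is forced to be `0` when `n` is even and
is `±1` when `n` is odd; splitting it off shows that this polynomial obeys the Stern recursion in
`2 ^ k - n`, so it is `B (2 ^ k - n)`. Minimal weight means a maximal number of zeros, so the
degree of this polynomial is the number of zeros of an optimal representation and its leading
coefficient is the number of optimal representations.
-/

open Polynomial Finset

lemma sternP_zero : sternP 0 = 0 := by rw [sternP]

lemma sternP_one : sternP 1 = 1 := by rw [sternP]

lemma sternP_two_mul (m : ℕ) : sternP (2 * m) = X * sternP m := by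
  rcases m with _ | m
  · simp [sternP_zero]
  · rw [show 2 * (m + 1) = 2 * m + 2 by ring, sternP, if_pos (by omega)]
    congr 2
    omega

lemma sternP_two_mul_add_one (m : ℕ) : sternP (2 * m + 1) = sternP m + sternP (m + 1) := by
  rcases m with _ | m
  · simp [sternP_zero, sternP_one]
  · rw [show 2 * (m + 1) + 1 = 2 * m + 1 + 2 by ring, sternP, if_neg (by omega)]
    congr 2 <;> omega

lemma bsdVal_succ {k : ℕ} (b : Fin (k + 1) → ℤ) :
    bsdVal b = b 0 + 2 * bsdVal (Fin.tail b) := by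
  simp only [bsdVal, Fin.sum_univ_succ, Fin.val_zero, pow_zero, mul_one, Fin.val_succ, pow_succ,
    mul_sum, Fin.tail]
  congr 1
  exact sum_congr rfl fun _ _ => by ring

lemma bsdVal_lt_two_pow {k : ℕ} {b : Fin k → ℤ} (hb : ∀ j, b j ≤ 1) :
    bsdVal b < 2 ^ k := by
  induction k with
  | zero => simp [bsdVal]
  | succ k ih =>
    have htail := ih (b := Fin.tail b) fun j => hb j.succ
    rw [bsdVal_succ, pow_succ]
    linarith [hb 0]

noncomputable def bsdReps (k : ℕ) (n : ℤ) : Finset (Fin k → ℤ) :=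
  {b ∈ Fintype.piFinset fun _ => {-1, 0, 1} | bsdVal b = n}

lemma mem_bsdReps {k : ℕ} {n : ℤ} {b : Fin k → ℤ} :
    b ∈ bsdReps k n ↔ IsBSDDigits b ∧ bsdVal b = n := by
  simp [bsdReps, IsBSDDigits]

lemma mem_bsdReps_succ {k : ℕ} {n : ℤ} {b : Fin (k + 1) → ℤ} :
    b ∈ bsdReps (k + 1) n ↔
      b 0 ∈ ({-1, 0, 1} : Finset ℤ) ∧ Fin.tail b ∈ bsdReps k ((n - b 0) / 2) ∧
        2 ∣ n - b 0 := by
  simp only [bsdReps, mem_filter, Fin.mem_piFinset_iff_zero_tail, bsdVal_succ]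
  constructor
  · rintro ⟨⟨h0, ht⟩, hv⟩
    exact ⟨h0, ⟨ht, by omega⟩, by omega⟩
  · rintro ⟨h0, ⟨ht, hv⟩, hd⟩
    exact ⟨⟨h0, ht⟩, by omega⟩

lemma sum_bsdReps_succ {M : Type*} [AddCommMonoid M] (k : ℕ) (n : ℤ)
    (f : (Fin (k + 1) → ℤ) → M) :
    ∑ b ∈ bsdReps (k + 1) n, f b =
      ∑ d ∈ ({-1, 0, 1} : Finset ℤ) with 2 ∣ n - d, ∑ c ∈ bsdReps k ((n - d) / 2),
        f (Fin.cons d c) := by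
  rw [sum_sigma']
  refine sum_nbij' (fun b => ⟨b 0, Fin.tail b⟩) (fun p => Fin.cons p.1 p.2)
    ?_ ?_ (fun b _ => Fin.cons_self_tail b) (fun p _ => by simp) (fun b _ => by simp)
  · intro b hb
    obtain ⟨h0, ht, hd⟩ := mem_bsdReps_succ.1 hb
    exact mem_sigma.2 ⟨mem_filter.2 ⟨h0, hd⟩, ht⟩
  · rintro ⟨d, c⟩ hp
    obtain ⟨hd, hc⟩ := mem_sigma.1 hp
    obtain ⟨h0, hdvd⟩ := mem_filter.1 hd
    rw [mem_bsdReps_succ, Fin.cons_zero, Fin.tail_cons]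
    exact ⟨h0, hc, hdvd⟩

def zeroCount {k : ℕ} (b : Fin k → ℤ) : ℕ := #{j | b j = 0}

lemma zeroCount_cons {k : ℕ} (d : ℤ) (c : Fin k → ℤ) :
    zeroCount (Fin.cons d c : Fin (k + 1) → ℤ) = (if d = 0 then 1 else 0) + zeroCount c := by
  simp only [zeroCount, card_filter, Fin.sum_univ_succ, Fin.cons_zero, Fin.cons_succ]

lemma zeroCount_le {k : ℕ} (b : Fin k → ℤ) : zeroCount b ≤ k :=
  (card_le_univ _).trans_eq (Fintype.card_fin k)

lemma ncard_setOf_ne_zero {k : ℕ} (b : Fin k → ℤ) :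
    {j | b j ≠ 0}.ncard = k - zeroCount b := by
  rw [Set.ncard_eq_toFinset_card', Set.toFinset_ofPred, zeroCount, filter_not,
    card_sdiff_of_subset (filter_subset _ _), card_univ, Fintype.card_fin]

noncomputable def zeroCountPoly (k : ℕ) (n : ℤ) : ℕ[X] :=
  ∑ b ∈ bsdReps k n, X ^ zeroCount b

lemma zeroCountPoly_zero (n : ℤ) : zeroCountPoly 0 n = if n = 0 then 1 else 0 := by
  split_ifs with hn <;> simp [zeroCountPoly, bsdReps, bsdVal, zeroCount, hn, eq_comm]

lemma zeroCountPoly_succ (k : ℕ) (n : ℤ) :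
    zeroCountPoly (k + 1) n = ∑ d ∈ ({-1, 0, 1} : Finset ℤ) with 2 ∣ n - d,
      X ^ (if d = 0 then 1 else 0) * zeroCountPoly k ((n - d) / 2) := by
  simp only [zeroCountPoly, sum_bsdReps_succ, zeroCount_cons, pow_add, mul_sum]

lemma zeroCountPoly_succ_two_mul (k : ℕ) (a : ℤ) :
    zeroCountPoly (k + 1) (2 * a) = X * zeroCountPoly k a := by
  have hdigit : ({-1, 0, 1} : Finset ℤ).filter (fun d => 2 ∣ 2 * a - d) = {0} := by
    ext d
    simp only [mem_filter, mem_insert, mem_singleton]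
    omega
  simp [zeroCountPoly_succ, hdigit]

lemma zeroCountPoly_succ_two_mul_add_one (k : ℕ) (a : ℤ) :
    zeroCountPoly (k + 1) (2 * a + 1) = zeroCountPoly k a + zeroCountPoly k (a + 1) := by
  have hdigit : ({-1, 0, 1} : Finset ℤ).filter (fun d => 2 ∣ 2 * a + 1 - d) = {-1, 1} := by
    ext d
    simp only [mem_filter, mem_insert, mem_singleton]
    omega
  rw [zeroCountPoly_succ, hdigit, sum_pair (by norm_num),
    show (2 * a + 1 - -1) / 2 = a + 1 by omega, show (2 * a + 1 - 1) / 2 = a by omega]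
  simp [add_comm]

theorem zeroCountPoly_eq_sternP {k m n : ℕ} (h : m + n = 2 ^ k) :
    zeroCountPoly k n = sternP m := by
  induction k generalizing m n with
  | zero =>
    obtain ⟨rfl, rfl⟩ | ⟨rfl, rfl⟩ : m = 1 ∧ n = 0 ∨ m = 0 ∧ n = 1 := by
      rw [pow_zero] at h; omega
    · simp [zeroCountPoly_zero, sternP_one]
    · simp [zeroCountPoly_zero, sternP_zero]
  | succ k ih =>
    rw [pow_succ] at h
    obtain ⟨a, rfl | rfl⟩ := Nat.even_or_odd' n
    · obtain ⟨b, rfl⟩ : ∃ b, m = 2 * b := ⟨m / 2, by omega⟩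
      push_cast
      rw [zeroCountPoly_succ_two_mul, ih (m := b) (by omega), sternP_two_mul]
    · obtain ⟨b, rfl⟩ : ∃ b, m = 2 * b + 1 := ⟨m / 2, by omega⟩
      have hsucc := ih (m := b) (n := a + 1) (by omega)
      push_cast at hsucc ⊢
      rw [zeroCountPoly_succ_two_mul_add_one, ih (m := b + 1) (by omega), hsucc,
        sternP_two_mul_add_one, add_comm]

lemma coeff_sum_X_pow {ι : Type*} (s : Finset ι) (z : ι → ℕ) (d : ℕ) :
    (∑ i ∈ s, (X : ℕ[X]) ^ z i).coeff d = #{i ∈ s | z i = d} := by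
  simp only [finsetSum_coeff, coeff_X_pow, card_filter]
  exact sum_congr rfl fun i _ => by simp [eq_comm]

lemma natDegree_sum_X_pow {ι : Type*} {s : Finset ι} (hs : s.Nonempty) (z : ι → ℕ) :
    (∑ i ∈ s, (X : ℕ[X]) ^ z i).natDegree = s.sup z := by
  obtain ⟨i, hi, hmax⟩ := exists_mem_eq_sup s hs z
  refine le_antisymm (natDegree_le_iff_coeff_eq_zero.2 fun d hd => ?_) (le_natDegree_of_ne_zero ?_)
  · rw [coeff_sum_X_pow, card_eq_zero, filter_eq_empty_iff]
    intro j hj hzj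
    have := le_sup (f := z) hj
    omega
  · rw [coeff_sum_X_pow, ← pos_iff_ne_zero, card_pos]
    exact ⟨i, mem_filter.2 ⟨hi, hmax.symm⟩⟩

lemma leadingCoeff_sum_X_pow {ι : Type*} {s : Finset ι} (hs : s.Nonempty) (z : ι → ℕ) :
    (∑ i ∈ s, (X : ℕ[X]) ^ z i).leadingCoeff = #{i ∈ s | z i = s.sup z} := by
  rw [leadingCoeff, natDegree_sum_X_pow hs, coeff_sum_X_pow]

lemma sInf_weight_eq {k : ℕ} {n : ℤ} (hs : (bsdReps k n).Nonempty) :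
    sInf {w | ∃ c : Fin k → ℤ, IsBSDDigits c ∧ bsdVal c = n ∧ {j | c j ≠ 0}.ncard = w}
      = k - (bsdReps k n).sup zeroCount := by
  obtain ⟨c, hc, hmax⟩ := exists_mem_eq_sup _ hs zeroCount
  refine IsLeast.csInf_eq ⟨⟨c, ?_⟩, ?_⟩
  · rw [← and_assoc, ← mem_bsdReps, ncard_setOf_ne_zero, hmax]
    exact ⟨hc, rfl⟩
  · rintro _ ⟨b, hdigits, hval, rfl⟩
    rw [ncard_setOf_ne_zero]
    exact Nat.sub_le_sub_left (le_sup (mem_bsdReps.2 ⟨hdigits, hval⟩)) k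

theorem opt_count_stern_general (n k : ℕ) (h : HasNAFLen (n : ℤ) k) :
    {b : Fin k → ℤ | IsBSDDigits b ∧ bsdVal b = (n : ℤ) ∧
        {j | b j ≠ 0}.ncard
          = sInf {w | ∃ c : Fin k → ℤ, IsBSDDigits c ∧ bsdVal c = (n : ℤ) ∧
              {j | c j ≠ 0}.ncard = w}}.ncard
      = (sternP (2 ^ k - n)).leadingCoeff ∧
    k - sInf {w | ∃ c : Fin k → ℤ, IsBSDDigits c ∧ bsdVal c = (n : ℤ) ∧
          {j | c j ≠ 0}.ncard = w}
      = (sternP (2 ^ k - n)).natDegree := by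
  obtain ⟨b, ⟨hdigits, -⟩, hval⟩ := h
  have hs : (bsdReps k n).Nonempty := ⟨b, mem_bsdReps.2 ⟨hdigits, hval⟩⟩
  have hn : n < 2 ^ k := by
    have hle (j : Fin k) : b j ≤ 1 := by
      have := hdigits j
      simp only [Set.mem_insert_iff, Set.mem_singleton_iff] at this
      omega
    exact_mod_cast hval ▸ bsdVal_lt_two_pow hle
  have hmax : (bsdReps k n).sup zeroCount ≤ k := Finset.sup_le fun b _ => zeroCount_le b
  rw [sInf_weight_eq hs, ← zeroCountPoly_eq_sternP (Nat.sub_add_cancel hn.le), zeroCountPoly,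
    leadingCoeff_sum_X_pow hs, natDegree_sum_X_pow hs, Nat.sub_sub_self hmax]
  refine ⟨?_, rfl⟩
  rw [← Set.ncard_coe_finset]
  congr 1
  ext c
  simp only [Set.mem_ofPred_eq, coe_filter, ← and_assoc, ← mem_bsdReps, ncard_setOf_ne_zero]
  have := zeroCount_le c
  constructor <;> rintro ⟨hc, hz⟩ <;> exact ⟨hc, by omega⟩

theorem opt_count_stern (n k : ℕ) (hn : 0 < n) (h : HasNAFLen (n : ℤ) k) :
    {b : Fin k → ℤ | IsBSDDigits b ∧ bsdVal b = (n : ℤ) ∧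
        {j | b j ≠ 0}.ncard
          = sInf {w | ∃ c : Fin k → ℤ, IsBSDDigits c ∧ bsdVal c = (n : ℤ) ∧
              {j | c j ≠ 0}.ncard = w}}.ncard
      = (sternP (2 ^ k - n)).leadingCoeff ∧
    k - sInf {w | ∃ c : Fin k → ℤ, IsBSDDigits c ∧ bsdVal c = (n : ℤ) ∧
          {j | c j ≠ 0}.ncard = w}
      = (sternP (2 ^ k - n)).natDegree :=
  opt_count_stern_general n k h
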